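/- arXiv:1203.5997 — 2 statements merged into one kernel-verified Lean document; each statement's English description precedes it below -/
import Mathlib

section
/- Let H be a complex Hilbert space, S : H → H a bounded, injective, positive self-adjoint operator with dense range, and K : H → H bounded such that S K = K* S. If A : H → H is a bounded operator satisfying A √S = √S K, then A is self-adjoint. -/
namespace ContinuousLinearMap

variable {R : Type*} [Semiring R]
  {E F G H : Type*} [TopologicalSpace E] [AddCommMonoid E] [Module R E]
  [TopologicalSpace F] [AddCommMonoid F] [Module R F]
  [TopologicalSpace G] [AddCommMonoid G] [Module R G] [T2Space G]
  [TopologicalSpace H] [AddCommMonoid H] [Module R H]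

theorem eq_of_comp_comp_eq {L : G →L[R] H} {M : E →L[R] F} {X Y : F →L[R] G}
    (hL : Function.Injective L) (hM : DenseRange M) (h : L ∘L X ∘L M = L ∘L Y ∘L M) :
    X = Y := by
  have hXY : X ∘L M = Y ∘L M := ext fun x => hL (DFunLike.congr_fun h x)
  exact DFunLike.coe_injective <|
    hM.equalizer X.continuous Y.continuous (congrArg DFunLike.coe hXY)

end ContinuousLinearMap

open ContinuousLinearMap in
theorem stmt0_general {H : Type*} [NormedAddCommGroup H] [InnerProductSpace ℂ H] [CompleteSpace H]
    (S K T A : H →L[ℂ] H)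
    (hS_inj : Function.Injective S) (hS_dense : DenseRange S)
    (hSK : S ∘L K = ContinuousLinearMap.adjoint K ∘L S)
    (hT_pos : T.IsPositive) (hT_sq : T ∘L T = S)
    (hA : A ∘L T = T ∘L K) :
    IsSelfAdjoint A := by
  have hT : adjoint T = T := hT_pos.isSelfAdjoint.adjoint_eq
  have hT_inj : Function.Injective T := by
    rw [← hT_sq, coe_comp] at hS_inj
    exact hS_inj.of_comp
  have hT_dense : DenseRange T := by
    rw [← hT_sq, coe_comp] at hS_dense
    exact hS_dense.of_comp
  refine isSelfAdjoint_iff'.2 <| eq_of_comp_comp_eq hT_inj hT_dense ?_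
  calc T ∘L adjoint A ∘L T = adjoint (A ∘L T) ∘L T := by rw [adjoint_comp, hT, comp_assoc]
    _ = adjoint K ∘L S := by rw [hA, adjoint_comp, hT, comp_assoc, hT_sq]
    _ = T ∘L A ∘L T := by rw [← hSK, hA, ← hT_sq, comp_assoc]

/-- If `S` is a bounded, injective, positive self-adjoint operator with dense
range on a complex Hilbert space, `K` is bounded with `S K = K* S`, `T` is the positive square
root of `S`, and `A` is a bounded operator with `A T = T K`, then `A` is self-adjoint. -/
theorem stmt0 {H : Type*} [NormedAddCommGroup H] [InnerProductSpace ℂ H] [CompleteSpace H]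
    (S K T A : H →L[ℂ] H)
    (hS_pos : S.IsPositive) (hS_inj : Function.Injective S) (hS_dense : DenseRange S)
    (hSK : S ∘L K = ContinuousLinearMap.adjoint K ∘L S)
    (hT_pos : T.IsPositive) (hT_sq : T ∘L T = S)
    (hA : A ∘L T = T ∘L K) :
    IsSelfAdjoint A :=
  stmt0_general S K T A hS_inj hS_dense hSK hT_pos hT_sq hA
end

section
/- Let A be a bounded self-adjoint operator on a complex Hilbert space H, h ∈ H, and let μ(R) = ⟨E(R)h, h⟩ be the associated scalar spectral measure. Fix x ∈ ℝ. If there exists a sequence εₙ → 0⁺ such that the vectors τₙ = (A - x - iεₙ)⁻¹ h converge weakly in H to some τ, then (A - x) τ = h and ∫ 1/(t-x)² dμ(t) < ∞. -/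
open scoped InnerProductSpace
open MeasureTheory Filter Topology

/-- A projection-valued spectral measure for the bounded self-adjoint operator `A` on a complex
Hilbert space: a family of commuting orthogonal projections, multiplicative and countably
additive in the strong topology, with `E(univ) = I`, compactly supported, commuting with `A`,
and whose diagonal scalar measures have moments reproducing those of `A`. -/
structure IsSpectralMeasure {H : Type*} [NormedAddCommGroup H] [InnerProductSpace ℂ H]
    [CompleteSpace H] (A : H →L[ℂ] H) (E : Set ℝ → H →L[ℂ] H) : Prop where
  selfAdjoint : ∀ R : Set ℝ, IsSelfAdjoint (E R)
  idem : ∀ R : Set ℝ, E R ∘L E R = E R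
  univ : E Set.univ = 1
  inter : ∀ R₁ R₂ : Set ℝ, E R₁ ∘L E R₂ = E (R₁ ∩ R₂)
  commutes : ∀ R : Set ℝ, A ∘L E R = E R ∘L A
  countablyAdditive : ∀ f : ℕ → Set ℝ, (∀ n, MeasurableSet (f n)) →
    Pairwise (Function.onFun Disjoint f) → ∀ v : H,
      HasSum (fun n => E (f n) v) (E (⋃ n, f n) v)
  compactSupport : ∃ s : Set ℝ, IsCompact s ∧ E sᶜ = 0
  moment : ∀ v : H, ∀ μ : MeasureTheory.Measure ℝ,
      (∀ R : Set ℝ, MeasurableSet R → ((μ R).toReal : ℂ) = ⟪v, E R v⟫_ℂ) →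
      ∀ n : ℕ, ⟪v, (A ^ n) v⟫_ℂ = ∫ t : ℝ, (t : ℂ) ^ n ∂μ

/-! Off the real axis `A - z` is invertible, so `(A - x - iεₙ) τₙ = h`; pairing with a fixed `w`
and moving `A` to the other side by its adjoint, the weak limit gives `(A - x) τ = h`.
For the integrability, let `ν(R) = ‖E(R) τ‖²`. Since `E(R)` commutes with `A`, the moment identities
applied to `E(R) τ` give `μ(R) = ‖(A - x) E(R) τ‖² = ∫_R (t - x)² dν`, i.e. `μ = (t - x)² ν`,
and `(t - x)⁻² (t - x)² ≤ 1` is integrable against the finite measure `ν`. -/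

open scoped Polynomial

theorem IsSelfAdjoint.isUnit_sub_smul_one {B : Type*} [CStarAlgebra B] {a : B}
    (ha : IsSelfAdjoint a) {z : ℂ} (hz : z.im ≠ 0) : IsUnit (a - z • 1) := by
  have hz : z ∉ spectrum ℂ a := fun hmem => hz (ha.im_eq_zero_of_mem_spectrum hmem)
  rw [spectrum.notMem_iff, Algebra.algebraMap_eq_smul_one] at hz
  simpa only [neg_sub] using hz.neg

theorem MeasureTheory.integrable_inv_withDensity_ofReal {α : Type*} [MeasurableSpace α]
    {ν : Measure α} [IsFiniteMeasure ν] {f : α → ℝ} (hf : Measurable f) :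
    Integrable (fun a => (f a)⁻¹) (ν.withDensity fun a => ENNReal.ofReal (f a)) := by
  rw [integrable_withDensity_iff hf.ennreal_ofReal (ae_of_all _ fun _ => ENNReal.ofReal_lt_top)]
  refine Integrable.of_bound (hf.inv.mul hf.ennreal_ofReal.ennreal_toReal).aestronglyMeasurable 1
    (ae_of_all _ fun a => ?_)
  rw [ENNReal.toReal_ofReal', Real.norm_eq_abs]
  rcases le_or_gt (f a) 0 with hfa | hfa
  · simp [max_eq_right hfa]
  · simp [max_eq_left hfa.le, inv_mul_cancel₀ hfa.ne']

section WeakLimit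

variable {H : Type*} [NormedAddCommGroup H] [InnerProductSpace ℂ H] [CompleteSpace H]

theorem ContinuousLinearMap.sub_smul_one_apply_eq_of_weak_tendsto (T : H →L[ℂ] H)
    {z : ℕ → ℂ} {z₀ : ℂ} (hz : Tendsto z atTop (𝓝 z₀)) {u : ℕ → H} {τ h : H}
    (hu : ∀ w, Tendsto (fun n => ⟪w, u n⟫_ℂ) atTop (𝓝 ⟪w, τ⟫_ℂ))
    (hTu : ∀ n, (T - z n • 1) (u n) = h) : (T - z₀ • 1) τ = h := by
  refine ext_inner_left ℂ fun w => ?_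
  have expand (c : ℂ) (v : H) :
      ⟪w, (T - c • 1) v⟫_ℂ = ⟪adjoint T w, v⟫_ℂ - c * ⟪w, v⟫_ℂ := by
    simp [adjoint_inner_left]
  have hlim := (hu (adjoint T w)).sub (hz.mul (hu w))
  simp_rw [← expand, hTu] at hlim
  exact tendsto_nhds_unique hlim tendsto_const_nhds

end WeakLimit

namespace IsSpectralMeasure

variable {H : Type*} [NormedAddCommGroup H] [InnerProductSpace ℂ H] [CompleteSpace H]
  {A : H →L[ℂ] H} {E : Set ℝ → H →L[ℂ] H}

theorem inner_apply_self (hE : IsSpectralMeasure A E) (R : Set ℝ) (v : H) :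
    ⟪v, E R v⟫_ℂ = (‖E R v‖ ^ 2 : ℝ) := by
  calc ⟪v, E R v⟫_ℂ = ⟪v, E R (E R v)⟫_ℂ := by
        rw [← ContinuousLinearMap.comp_apply, hE.idem]
    _ = ⟪E R v, E R v⟫_ℂ := ((hE.selfAdjoint R).isSymmetric v (E R v)).symm
    _ = (‖E R v‖ ^ 2 : ℝ) := by rw [inner_self_eq_norm_sq_to_K]; norm_cast

theorem apply_empty (hE : IsSpectralMeasure A E) : E ∅ = 0 := by
  ext v
  have hsum := hE.countablyAdditive (fun _ => ∅) (fun _ => .empty)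
    (fun _ _ _ => disjoint_bot_left) v
  simp only [Set.iUnion_empty] at hsum
  exact tendsto_nhds_unique tendsto_const_nhds hsum.summable.tendsto_atTop_zero

noncomputable def diagMeasure (hE : IsSpectralMeasure A E) (v : H) : Measure ℝ :=
  Measure.ofMeasurable (fun R _ => ENNReal.ofReal (‖E R v‖ ^ 2)) (by simp [hE.apply_empty])
    fun f hf hdisj => by
      have hsum : HasSum (fun n => ‖E (f n) v‖ ^ 2) (‖E (⋃ n, f n) v‖ ^ 2) := by
        have := Complex.reCLM.hasSum ((innerSL ℂ v).hasSum (hE.countablyAdditive f hf hdisj v))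
        simpa only [innerSL_apply_apply, hE.inner_apply_self, Complex.reCLM_apply,
          Complex.ofReal_re] using this
      rw [← hsum.tsum_eq, ENNReal.ofReal_tsum_of_nonneg (fun n => sq_nonneg _) hsum.summable]

theorem diagMeasure_apply (hE : IsSpectralMeasure A E) (v : H) {R : Set ℝ}
    (hR : MeasurableSet R) : hE.diagMeasure v R = ENNReal.ofReal (‖E R v‖ ^ 2) :=
  Measure.ofMeasurable_apply R hR

instance (hE : IsSpectralMeasure A E) (v : H) : IsFiniteMeasure (hE.diagMeasure v) :=
  ⟨by simp [hE.diagMeasure_apply v .univ]⟩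

theorem eq_diagMeasure (hE : IsSpectralMeasure A E) {v : H} {μ : Measure ℝ} [IsFiniteMeasure μ]
    (hμ : ∀ R : Set ℝ, MeasurableSet R → ((μ R).toReal : ℂ) = ⟪v, E R v⟫_ℂ) :
    μ = hE.diagMeasure v := by
  ext R hR
  rw [hE.diagMeasure_apply v hR, ← ENNReal.ofReal_toReal (measure_ne_top μ R)]
  exact congrArg ENNReal.ofReal (mod_cast (hμ R hR).trans (hE.inner_apply_self R v))

theorem diagMeasure_apply_eq_restrict (hE : IsSpectralMeasure A E) (v : H) {R : Set ℝ}
    (hR : MeasurableSet R) : hE.diagMeasure (E R v) = (hE.diagMeasure v).restrict R := by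
  ext S hS
  rw [Measure.restrict_apply hS, hE.diagMeasure_apply _ hS, hE.diagMeasure_apply _ (hS.inter hR),
    ← hE.inter]
  rfl

theorem integrable_diagMeasure (hE : IsSpectralMeasure A E) (v : H) {F : Type*}
    [NormedAddCommGroup F] {g : ℝ → F} (hg : Continuous g) : Integrable g (hE.diagMeasure v) := by
  obtain ⟨s, hs, hsE⟩ := hE.compactSupport
  obtain ⟨C, hC⟩ := hs.exists_bound_of_continuousOn hg.continuousOn
  have hsupp : ∀ᵐ t ∂hE.diagMeasure v, t ∈ s := by
    change hE.diagMeasure v sᶜ = 0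
    simpa [hsE] using hE.diagMeasure_apply v hs.isClosed.measurableSet.compl
  exact Integrable.of_bound hg.aestronglyMeasurable C (hsupp.mono hC)

theorem inner_aeval_eq_integral (hE : IsSpectralMeasure A E) (v : H) (p : ℂ[X]) :
    ⟪v, Polynomial.aeval A p v⟫_ℂ = ∫ t : ℝ, p.eval (t : ℂ) ∂hE.diagMeasure v := by
  induction p using Polynomial.induction_on' with
  | add p q hp hq =>
    simp only [map_add, add_apply, inner_add_right, hp, hq, Polynomial.eval_add]
    exact (integral_add (hE.integrable_diagMeasure v (p.continuous.comp Complex.continuous_ofReal))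
      (hE.integrable_diagMeasure v (q.continuous.comp Complex.continuous_ofReal))).symm
  | monomial n a =>
    have hmoment := hE.moment v (hE.diagMeasure v) fun R hR => by
      rw [hE.diagMeasure_apply v hR, ENNReal.toReal_ofReal (sq_nonneg _), hE.inner_apply_self]
    simp only [Polynomial.aeval_monomial, Algebra.algebraMap_eq_smul_one, smul_mul_assoc, one_mul,
      smul_apply, inner_smul_right, hmoment n, Polynomial.eval_monomial,
      integral_const_mul]

theorem norm_sub_smul_one_apply_sq (hA : IsSelfAdjoint A) (hE : IsSpectralMeasure A E) (v : H)
    (x : ℝ) : ‖(A - (x : ℂ) • 1) v‖ ^ 2 = ∫ t : ℝ, (t - x) ^ 2 ∂hE.diagMeasure v := by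
  set B := A - (x : ℂ) • (1 : H →L[ℂ] H)
  have hB : IsSelfAdjoint B := hA.sub (IsSelfAdjoint.smul (Complex.conj_ofReal x) (.one _))
  have hpoly : Polynomial.aeval A ((Polynomial.X - Polynomial.C (x : ℂ)) ^ 2) = B * B := by
    simp [B, sq, Algebra.algebraMap_eq_smul_one]
  apply Complex.ofReal_injective
  calc ((‖B v‖ ^ 2 : ℝ) : ℂ) = ⟪B v, B v⟫_ℂ := by rw [inner_self_eq_norm_sq_to_K]; norm_cast
    _ = ⟪v, Polynomial.aeval A ((Polynomial.X - Polynomial.C (x : ℂ)) ^ 2) v⟫_ℂ := by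
        rw [hpoly]; exact hB.isSymmetric v (B v)
    _ = ∫ t : ℝ, (((t - x) ^ 2 : ℝ) : ℂ) ∂hE.diagMeasure v := by
        rw [hE.inner_aeval_eq_integral]; simp
    _ = ((∫ t : ℝ, (t - x) ^ 2 ∂hE.diagMeasure v : ℝ) : ℂ) := integral_ofReal

theorem diagMeasure_sub_smul_one_apply (hA : IsSelfAdjoint A) (hE : IsSpectralMeasure A E)
    (v : H) (x : ℝ) :
    hE.diagMeasure ((A - (x : ℂ) • 1) v) =
      (hE.diagMeasure v).withDensity fun t => ENNReal.ofReal ((t - x) ^ 2) := by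
  ext R hR
  have hcomm : E R ((A - (x : ℂ) • 1) v) = (A - (x : ℂ) • 1) (E R v) := by
    simp only [sub_apply, smul_apply, one_apply_eq_self, map_sub, map_smul]
    rw [← ContinuousLinearMap.comp_apply, ← hE.commutes, ContinuousLinearMap.comp_apply]
  rw [hE.diagMeasure_apply _ hR, withDensity_apply _ hR, hcomm, norm_sub_smul_one_apply_sq hA hE,
    hE.diagMeasure_apply_eq_restrict v hR, ofReal_integral_eq_lintegral_ofReal]
  · exact (hE.integrable_diagMeasure v (by fun_prop)).restrict
  · exact ae_of_all _ fun t => sq_nonneg _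

end IsSpectralMeasure

/-- Let `A` be bounded self-adjoint, `h ∈ H`, and `μ(R) = ⟨E(R)h,h⟩` its scalar
spectral measure. If for some sequence `εₙ → 0⁺` the vectors `τₙ = (A - x - iεₙ)⁻¹ h` converge
weakly to `τ`, then `(A - x)τ = h` and `∫ 1/(t-x)² dμ(t) < ∞`. -/
theorem stmt5 {H : Type*} [NormedAddCommGroup H] [InnerProductSpace ℂ H] [CompleteSpace H]
    (A : H →L[ℂ] H) (hA : IsSelfAdjoint A)
    (E : Set ℝ → H →L[ℂ] H) (hE : IsSpectralMeasure A E) (h : H)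
    (μ : Measure ℝ) [IsFiniteMeasure μ]
    (hμ : ∀ R : Set ℝ, MeasurableSet R → ((μ R).toReal : ℂ) = ⟪h, E R h⟫_ℂ)
    (x : ℝ) (ε : ℕ → ℝ) (hεpos : ∀ n, 0 < ε n)
    (hε : Tendsto ε atTop (𝓝 0)) (τ : H)
    (hτ : ∀ w : H, Tendsto
        (fun n => ⟪w, Ring.inverse (A - (((x : ℂ) + (ε n : ℂ) * Complex.I)) •
            (1 : H →L[ℂ] H)) h⟫_ℂ)
        atTop (𝓝 ⟪w, τ⟫_ℂ)) :
    (A - (x : ℂ) • (1 : H →L[ℂ] H)) τ = h ∧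
      Integrable (fun t : ℝ => ((t - x) ^ 2)⁻¹) μ := by
  set z : ℕ → ℂ := fun n => (x : ℂ) + (ε n : ℂ) * Complex.I
  have hz : Tendsto z atTop (𝓝 (x : ℂ)) := by
    simpa using tendsto_const_nhds.add
      (((Complex.continuous_ofReal.tendsto 0).comp hε).mul_const Complex.I)
  have hsolve (n : ℕ) : (A - z n • 1) (Ring.inverse (A - z n • 1) h) = h := by
    have hunit := hA.isUnit_sub_smul_one (z := z n) (by simpa [z] using (hεpos n).ne')
    change ((A - z n • 1) * Ring.inverse (A - z n • 1)) h = h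
    rw [Ring.mul_inverse_cancel _ hunit, one_apply_eq_self]
  have hτh : (A - (x : ℂ) • 1) τ = h := A.sub_smul_one_apply_eq_of_weak_tendsto hz hτ hsolve
  refine ⟨hτh, ?_⟩
  rw [hE.eq_diagMeasure hμ, ← hτh, hE.diagMeasure_sub_smul_one_apply hA]
  exact integrable_inv_withDensity_ofReal (by fun_prop)
end
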